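/- Define Y_a(x') = ∫_ℝ φ_a(x) exp(−(x−(1−α_t)x')²/(2α_t(2−α_t))) dx for 0 < α_t < 2. Then Y satisfies the recursion √a · Y_a = −(1−α_t)² √(a−1) · Y_{a−2} + (1−α_t) x' · Y_{a−1} for a ≥ 2, with Y_0 = √(2π α_t(2−α_t)) and Y_1(x') = (1−α_t) x' Y_0. -/

import Mathlib

/-!
The `φₙ` are polynomials satisfying the three-term recurrence
`√(n+1) φₙ₊₁ = x φₙ - √n φₙ₋₁` and the ladder relation `φₙ₊₁' = √(n+1) φₙ`.
Write `x φₙ = (x - m) φₙ + m φₙ` with `m = (1 - αₜ) x'` and integrate against the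
Gaussian weight of variance `v = αₜ (2 - αₜ)` centred at `m`. Stein's identity
`∫ (x - m) u w = v ∫ u' w` turns the first term into `v √n Yₙ₋₁`, and
`v - 1 = -(1 - αₜ)²` gives the recursion. At `n = 0` it reads `Y₁ = m Y₀`, and `Y₀` is
the Gaussian integral.
-/

open MeasureTheory

noncomputable def phi : ℕ → ℝ → ℝ
  | 0 => fun _ => 1
  | 1 => fun x => x
  | (n + 2) => fun x =>
      (x * phi (n + 1) x - Real.sqrt ((n : ℝ) + 1) * phi n x) / Real.sqrt ((n : ℝ) + 2)

noncomputable def ω0 (x : ℝ) : ℝ := (Real.sqrt (2 * Real.pi))⁻¹ * Real.exp (-x ^ 2 / 2)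

noncomputable def Y (αt : ℝ) (a : ℕ) (x' : ℝ) : ℝ :=
  ∫ x : ℝ, phi a x * Real.exp (-(x - (1 - αt) * x') ^ 2 / (2 * αt * (2 - αt)))

open Real Polynomial Filter

noncomputable def gaussianWeight (v m x : ℝ) : ℝ := exp (-(x - m) ^ 2 / (2 * v))

theorem integrable_pow_mul_exp_neg_mul_sq {b : ℝ} (hb : 0 < b) (n : ℕ) :
    Integrable fun x : ℝ => x ^ n * exp (-b * x ^ 2) := by
  simpa using
    integrable_rpow_mul_exp_neg_mul_sq hb (s := n) (neg_one_lt_zero.trans_le n.cast_nonneg)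

theorem integrable_eval_mul_exp_neg_mul_sq {b : ℝ} (hb : 0 < b) (p : ℝ[X]) :
    Integrable fun x : ℝ => p.eval x * exp (-b * x ^ 2) := by
  induction p using Polynomial.induction_on' with
  | add p q hp hq => simpa only [eval_add, add_mul, Pi.add_def] using hp.add hq
  | monomial n a => simpa [mul_assoc] using (integrable_pow_mul_exp_neg_mul_sq hb n).const_mul a

theorem integrable_eval_mul_gaussianWeight {v : ℝ} (hv : 0 < v) (m : ℝ) (p : ℝ[X]) :
    Integrable fun x : ℝ => p.eval x * gaussianWeight v m x := by
  have hb : 0 < (2 * v)⁻¹ := by positivity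
  convert (integrable_eval_mul_exp_neg_mul_sq hb (p.comp (X + C m))).comp_sub_right m using 3 with x
  · simp
  · rw [gaussianWeight]
    ring_nf

theorem integral_gaussianWeight {v : ℝ} (hv : 0 < v) (m : ℝ) :
    ∫ x, gaussianWeight v m x = √(2 * π * v) := by
  have := integral_gaussian (2 * v)⁻¹
  rw [show π / (2 * v)⁻¹ = 2 * π * v by field_simp] at this
  rw [← this, ← integral_sub_right_eq_self (fun x => exp (-(2 * v)⁻¹ * x ^ 2)) m]
  congr with x
  rw [gaussianWeight]
  ring_nf

theorem hasDerivAt_gaussianWeight (v m x : ℝ) :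
    HasDerivAt (gaussianWeight v m) (-((x - m) * gaussianWeight v m x) / v) x := by
  refine ((((hasDerivAt_id x).sub_const m).pow 2).neg.div_const (2 * v)).exp.congr_deriv ?_
  simp only [gaussianWeight, id, Pi.neg_apply, Pi.pow_apply]
  field_simp
  ring

theorem integral_sub_mul_mul_gaussianWeight {v : ℝ} (hv : v ≠ 0) (m : ℝ) {u u' : ℝ → ℝ}
    (hu : ∀ x, HasDerivAt u (u' x) x)
    (huw : Integrable fun x => u x * gaussianWeight v m x)
    (hu'w : Integrable fun x => u' x * gaussianWeight v m x)
    (hxuw : Integrable fun x => (x - m) * u x * gaussianWeight v m x) :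
    ∫ x, (x - m) * u x * gaussianWeight v m x = v * ∫ x, u' x * gaussianWeight v m x := by
  have hibp := integral_mul_deriv_eq_deriv_mul_of_integrable (fun x _ => hu x)
    (fun x _ => hasDerivAt_gaussianWeight v m x) ?_ hu'w huw
  · simp only [mul_div_assoc', mul_neg, mul_left_comm (u _), ← mul_assoc, integral_neg,
      integral_div] at hibp
    rw [div_eq_iff hv] at hibp
    linear_combination -hibp
  · convert (hxuw.div_const v).neg using 1
    ext x
    simp only [Pi.mul_apply, Pi.neg_apply]
    ring

theorem exists_polynomial_phi : ∀ n, ∃ p : ℝ[X], ∀ x, phi n x = p.eval x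
  | 0 => ⟨1, by simp [phi]⟩
  | 1 => ⟨X, by simp [phi]⟩
  | n + 2 => by
    obtain ⟨p, hp⟩ := exists_polynomial_phi (n + 1)
    obtain ⟨q, hq⟩ := exists_polynomial_phi n
    exact ⟨C (√((n : ℝ) + 2))⁻¹ * (X * p - C √((n : ℝ) + 1) * q),
      fun x => by simp [phi, hp, hq, div_eq_inv_mul]⟩

-- At `n = 0` the truncated `n - 1` is harmless: its coefficient is `√0 = 0`.
theorem sqrt_succ_mul_phi_succ (n : ℕ) (x : ℝ) :
    √((n : ℝ) + 1) * phi (n + 1) x = x * phi n x - √n * phi (n - 1) x := by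
  cases n with
  | zero => simp [phi]
  | succ n =>
    have hpos : 0 < √((n : ℝ) + 2) := by positivity
    rw [phi, Nat.cast_succ, add_assoc, one_add_one_eq_two, mul_div_cancel₀ _ hpos.ne',
      add_tsub_cancel_right]

theorem hasDerivAt_phi : ∀ (n : ℕ) (x : ℝ), HasDerivAt (phi n) (√n * phi (n - 1) x) x
  | 0, x => by simpa [phi] using hasDerivAt_const x (1 : ℝ)
  | 1, x => by simpa [phi] using hasDerivAt_id' x
  | n + 2, x => by
    refine ((((hasDerivAt_id x).mul (hasDerivAt_phi (n + 1) x)).sub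
      ((hasDerivAt_phi n x).const_mul √((n : ℝ) + 1))).div_const √((n : ℝ) + 2)).congr_deriv ?_
    have hpos : 0 < √((n : ℝ) + 2) := by positivity
    have hsq₁ : √((n : ℝ) + 1) ^ 2 = n + 1 := sq_sqrt (by positivity)
    have hsq₂ : √((n : ℝ) + 2) ^ 2 = n + 2 := sq_sqrt (by positivity)
    push_cast
    simp only [id]
    rw [div_eq_iff hpos.ne']
    linear_combination phi (n + 1) x * hsq₁ - phi (n + 1) x * hsq₂
      - √((n : ℝ) + 1) * sqrt_succ_mul_phi_succ n x

theorem integrable_phi_mul_gaussianWeight {v : ℝ} (hv : 0 < v) (m : ℝ) (n : ℕ) :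
    Integrable fun x => phi n x * gaussianWeight v m x := by
  obtain ⟨p, hp⟩ := exists_polynomial_phi n
  simpa only [hp] using integrable_eval_mul_gaussianWeight hv m p

theorem integrable_sub_mul_phi_mul_gaussianWeight {v : ℝ} (hv : 0 < v) (m : ℝ) (n : ℕ) :
    Integrable fun x => (x - m) * phi n x * gaussianWeight v m x := by
  obtain ⟨p, hp⟩ := exists_polynomial_phi n
  have := integrable_eval_mul_gaussianWeight hv m ((X - C m) * p)
  simp only [eval_mul, eval_sub, eval_X, eval_C] at this
  simpa only [hp] using this

theorem sqrt_succ_mul_integral_phi_succ {v : ℝ} (hv : 0 < v) (m : ℝ) (n : ℕ) :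
    √((n : ℝ) + 1) * ∫ x, phi (n + 1) x * gaussianWeight v m x
      = (v - 1) * √n * (∫ x, phi (n - 1) x * gaussianWeight v m x)
        + m * ∫ x, phi n x * gaussianWeight v m x := by
  have hint := integrable_phi_mul_gaussianWeight hv m
  have hxint := integrable_sub_mul_phi_mul_gaussianWeight hv m n
  have hint' : Integrable fun x => √n * phi (n - 1) x * gaussianWeight v m x := by
    simpa only [mul_assoc] using (hint (n - 1)).const_mul √n
  have hstein :=
    integral_sub_mul_mul_gaussianWeight hv.ne' m (hasDerivAt_phi n) (hint n) hint' hxint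
  calc √((n : ℝ) + 1) * ∫ x, phi (n + 1) x * gaussianWeight v m x
      = ∫ x, ((x - m) * phi n x * gaussianWeight v m x + m * (phi n x * gaussianWeight v m x))
          - √n * (phi (n - 1) x * gaussianWeight v m x) := by
        rw [← integral_const_mul]
        congr with x
        linear_combination gaussianWeight v m x * sqrt_succ_mul_phi_succ n x
    _ = (∫ x, (x - m) * phi n x * gaussianWeight v m x)
          + m * (∫ x, phi n x * gaussianWeight v m x)
          - √n * ∫ x, phi (n - 1) x * gaussianWeight v m x := by
        rw [integral_sub (hxint.fun_add ((hint n).const_mul m)) ((hint (n - 1)).const_mul _),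
          integral_add hxint ((hint n).const_mul m), integral_const_mul, integral_const_mul]
    _ = _ := by
        rw [hstein, ← integral_const_mul]
        simp only [mul_assoc, integral_const_mul]
        ring

theorem Y_eq_integral_phi_mul_gaussianWeight (αt : ℝ) (n : ℕ) (x' : ℝ) :
    Y αt n x' = ∫ x, phi n x * gaussianWeight (αt * (2 - αt)) ((1 - αt) * x') x := by
  simp only [Y, gaussianWeight, mul_assoc]

theorem Y_zero {αt : ℝ} (hv : 0 < αt * (2 - αt)) (x' : ℝ) :
    Y αt 0 x' = √(2 * π * αt * (2 - αt)) := by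
  simp only [Y_eq_integral_phi_mul_gaussianWeight, phi, one_mul, integral_gaussianWeight hv,
    mul_assoc]

theorem sqrt_succ_mul_Y_succ {αt : ℝ} (hv : 0 < αt * (2 - αt)) (n : ℕ) (x' : ℝ) :
    √((n : ℝ) + 1) * Y αt (n + 1) x'
      = -(1 - αt) ^ 2 * √n * Y αt (n - 1) x' + (1 - αt) * x' * Y αt n x' := by
  simp only [Y_eq_integral_phi_mul_gaussianWeight, sqrt_succ_mul_integral_phi_succ hv]
  ring

theorem stmt14 (αt : ℝ) (h1 : 0 < αt) (h2 : αt < 2) :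
    (∀ x' : ℝ, Y αt 0 x' = Real.sqrt (2 * Real.pi * αt * (2 - αt))) ∧
    (∀ x' : ℝ, Y αt 1 x' = (1 - αt) * x' * Real.sqrt (2 * Real.pi * αt * (2 - αt))) ∧
    (∀ a : ℕ, 2 ≤ a → ∀ x' : ℝ,
      Real.sqrt (a : ℝ) * Y αt a x'
        = -(1 - αt) ^ 2 * Real.sqrt ((a : ℝ) - 1) * Y αt (a - 2) x'
          + (1 - αt) * x' * Y αt (a - 1) x') := by
  have hv : 0 < αt * (2 - αt) := mul_pos h1 (by linarith)
  refine ⟨Y_zero hv, fun x' => ?_, fun a ha x' => ?_⟩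
  · simpa [Y_zero hv] using sqrt_succ_mul_Y_succ hv 0 x'
  · obtain ⟨n, rfl⟩ : ∃ n, a = n + 1 := ⟨a - 1, by omega⟩
    simpa [show n + 1 - 2 = n - 1 by omega] using sqrt_succ_mul_Y_succ hv n x'
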